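/- arXiv:dg-ga/9508014 — 6 statements merged into one kernel-verified Lean document; each statement's English description precedes it below -/
import Mathlib

section
/- The only holomorphic solutions of the differential equation y'' = y² + C (C a complex constant) that are defined on all of ℂ are constant functions. -/
set_option maxHeartbeats 1000000

/-- The only holomorphic solutions of `y'' = y² + C` defined on all of `ℂ`
are the constant functions. -/
theorem stmt_0 (C : ℂ) (y : ℂ → ℂ) (hy : Differentiable ℂ y)
    (hode : ∀ x : ℂ, deriv (deriv y) x = y x ^ 2 + C) :
    ∃ c : ℂ, ∀ x : ℂ, y x = c := by
  classical
  -- the derivative of `y` is entire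
  have hy' : Differentiable ℂ (deriv y) := by
    have h1 : AnalyticOnNhd ℂ y Set.univ := Complex.analyticOnNhd_univ_iff_differentiable.mpr hy
    exact Complex.analyticOnNhd_univ_iff_differentiable.mp h1.deriv
  -- the energy function
  set E : ℂ → ℂ := fun x => (deriv y x) ^ 2 - (2/3 : ℂ) * (y x) ^ 3 - 2 * C * y x with hE_def
  have hE : ∀ x : ℂ, HasDerivAt E 0 x := by
    intro x
    have hyx : HasDerivAt y (deriv y x) x := hy.differentiableAt.hasDerivAt
    have hdx : HasDerivAt (deriv y) ((y x) ^ 2 + C) x := by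
      have h := hy'.differentiableAt.hasDerivAt (x := x)
      rwa [hode x] at h
    have h1 : HasDerivAt (fun t => (deriv y t) ^ 2)
        ((2 : ℕ) * (deriv y x) ^ 1 * ((y x) ^ 2 + C)) x := hdx.pow 2
    have h2 : HasDerivAt (fun t => (2/3 : ℂ) * (y t) ^ 3)
        ((2/3 : ℂ) * ((3 : ℕ) * (y x) ^ 2 * deriv y x)) x := (hyx.pow 3).const_mul _
    have h3 : HasDerivAt (fun t => 2 * C * y t) (2 * C * deriv y x) x := hyx.const_mul _
    have h4 := (h1.sub h2).sub h3
    have h5 : ((2 : ℕ) * (deriv y x) ^ 1 * ((y x) ^ 2 + C)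
        - (2/3 : ℂ) * ((3 : ℕ) * (y x) ^ 2 * deriv y x)) - 2 * C * deriv y x = 0 := by
      push_cast
      ring
    rwa [h5] at h4
  have hEconst : ∀ x : ℂ, E x = E 0 := by
    intro x
    exact is_const_of_deriv_eq_zero (fun t => (hE t).differentiableAt)
      (fun t => (hE t).deriv) x 0
  set K : ℂ := E 0 with hK_def
  have hK : ∀ x : ℂ, (deriv y x) ^ 2 = (2/3 : ℂ) * (y x) ^ 3 + 2 * C * y x + K := by
    intro x
    have h := hEconst x
    rw [hE_def] at h
    simp only at h
    linear_combination h
  -- the threshold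
  set R1 : ℝ := 12 * ‖C‖ + 6 * ‖K‖ + 2 with hR1_def
  have hR1two : (2 : ℝ) ≤ R1 := by
    have := norm_nonneg C; have := norm_nonneg K; rw [hR1_def]; linarith
  -- key growth step
  have step : ∀ p : ℂ, R1 ≤ ‖y p‖ → ∃ q : ℂ,
      dist q p ≤ 3 / Real.sqrt ‖y p‖ ∧ 2 * ‖y p‖ ≤ ‖y q‖ := by
    intro p hp
    set R : ℝ := ‖y p‖ with hR
    have hR2 : (2 : ℝ) ≤ R := le_trans hR1two hp
    have hRpos : (0 : ℝ) < R := by linarith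
    have hsq : (0 : ℝ) < Real.sqrt R := Real.sqrt_pos.mpr hRpos
    set r : ℝ := 3 / Real.sqrt R with hr_def
    have hrpos : (0 : ℝ) < r := by positivity
    -- lower bound on the derivative
    have hnorm23 : ‖(2/3 : ℂ)‖ = 2/3 := by
      rw [norm_div]
      simp
    have hlow : R ^ 3 / 2 ≤ ‖deriv y p‖ ^ 2 := by
      have e1 : ‖deriv y p‖ ^ 2 = ‖(deriv y p) ^ 2‖ := (norm_pow _ 2).symm
      rw [e1, hK p]
      have nA : ‖(2/3 : ℂ) * (y p) ^ 3‖ = (2/3) * R ^ 3 := by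
        rw [norm_mul, norm_pow, hnorm23, hR]
      have nB : ‖2 * C * y p‖ = 2 * ‖C‖ * R := by
        rw [norm_mul, norm_mul, hR, Complex.norm_ofNat]
      -- triangle inequalities
      have t1 : ‖(2/3 : ℂ) * (y p) ^ 3‖ ≤ ‖(2/3 : ℂ) * (y p) ^ 3 + 2 * C * y p‖
          + ‖2 * C * y p‖ := by
        have := norm_add_le ((2/3 : ℂ) * (y p) ^ 3 + 2 * C * y p) (-(2 * C * y p))
        simpa using this
      have t2 : ‖(2/3 : ℂ) * (y p) ^ 3 + 2 * C * y p‖ ≤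
          ‖(2/3 : ℂ) * (y p) ^ 3 + 2 * C * y p + K‖ + ‖K‖ := by
        have := norm_add_le ((2/3 : ℂ) * (y p) ^ 3 + 2 * C * y p + K) (-K)
        simpa using this
      rw [nA, nB] at t1
      -- arithmetic: (2/3)R³ - 2‖C‖R - ‖K‖ ≥ R³/2
      have hCn := norm_nonneg C
      have hKn := norm_nonneg K
      have a1 : 12 * ‖C‖ + 6 * ‖K‖ ≤ R := by rw [hR1_def] at hp; linarith
      have a2 : (12 * ‖C‖ + 6 * ‖K‖) * R ≤ R * R :=
        mul_le_mul_of_nonneg_right a1 hRpos.le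
      have a3 : R * R ≤ R * R * R := by nlinarith
      nlinarith [t1, t2]
    -- if no large value on the circle, Cauchy's estimate gives a contradiction
    by_contra hcon
    push_neg at hcon
    have hCb : ∀ z ∈ Metric.sphere p r, ‖y z‖ ≤ 2 * R := by
      intro z hz
      exact (hcon z (le_of_eq (Metric.mem_sphere.mp hz))).le
    have hcauchy : ‖deriv y p‖ ≤ 2 * R / r :=
      Complex.norm_deriv_le_of_forall_mem_sphere_norm_le hrpos hy.diffContOnCl hCb
    have hr2 : r ^ 2 = 9 / R := by
      rw [hr_def, div_pow, Real.sq_sqrt hRpos.le]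
      norm_num
    have hsq2 : ‖deriv y p‖ ^ 2 ≤ (2 * R / r) ^ 2 := by
      have h0 : (0 : ℝ) ≤ ‖deriv y p‖ := norm_nonneg _
      nlinarith [hcauchy]
    have hub : (2 * R / r) ^ 2 = 4 / 9 * R ^ 3 := by
      rw [div_pow, hr2]
      field_simp
      ring
    rw [hub] at hsq2
    nlinarith [hlow, hsq2, pow_pos hRpos 3]
  -- main case split
  by_cases hbig : ∃ p : ℂ, R1 ≤ ‖y p‖
  · exfalso
    obtain ⟨x0, hx0⟩ := hbig
    have hR1pos : (0 : ℝ) < R1 := by linarith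
    have hsqR1 : (0 : ℝ) < Real.sqrt R1 := Real.sqrt_pos.mpr hR1pos
    -- an escaping sequence of points staying in a fixed ball
    have hex : ∀ k : ℕ, ∃ z : ℂ, 2 ^ k * R1 ≤ ‖y z‖ ∧
        dist z x0 ≤ (12 / Real.sqrt R1) * (1 - (3/4 : ℝ) ^ k) := by
      intro k
      induction k with
      | zero => exact ⟨x0, by simpa using hx0, by simp⟩
      | succ n ih =>
        obtain ⟨z, hz1, hz2⟩ := ih
        have h2n : (1:ℝ) ≤ 2 ^ n := one_le_pow₀ (by norm_num)
        have hzR1 : R1 ≤ ‖y z‖ := by nlinarith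
        obtain ⟨q, hq1, hq2⟩ := step z hzR1
        refine ⟨q, ?_, ?_⟩
        · have e1 : (2:ℝ) ^ (n+1) * R1 = 2 * (2 ^ n * R1) := by ring
          rw [e1]
          linarith
        · have ht := dist_triangle q z x0
          have hd : dist q z ≤ (3 / Real.sqrt R1) * (3/4 : ℝ) ^ n := by
            refine le_trans hq1 ?_
            have hgeq : ((4:ℝ)/3) ^ n * Real.sqrt R1 ≤ Real.sqrt ‖y z‖ := by
              have h169 : ((16:ℝ)/9) ^ n ≤ 2 ^ n :=
                pow_le_pow_left₀ (by norm_num) (by norm_num) n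
              have hsqval : (((4:ℝ)/3) ^ n * Real.sqrt R1) ^ 2 ≤ ‖y z‖ := by
                have e2 : (((4:ℝ)/3) ^ n * Real.sqrt R1) ^ 2 = ((16:ℝ)/9) ^ n * R1 := by
                  rw [mul_pow, Real.sq_sqrt hR1pos.le, ← pow_mul, mul_comm n 2, pow_mul]
                  norm_num
                rw [e2]
                calc ((16:ℝ)/9) ^ n * R1 ≤ 2 ^ n * R1 :=
                      mul_le_mul_of_nonneg_right h169 hR1pos.le
                  _ ≤ ‖y z‖ := hz1
              have hnn : (0:ℝ) ≤ ((4:ℝ)/3) ^ n * Real.sqrt R1 := by positivity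
              calc ((4:ℝ)/3) ^ n * Real.sqrt R1
                  = Real.sqrt ((((4:ℝ)/3) ^ n * Real.sqrt R1) ^ 2) := (Real.sqrt_sq hnn).symm
                _ ≤ Real.sqrt ‖y z‖ := Real.sqrt_le_sqrt hsqval
            have hpos2 : (0:ℝ) < ((4:ℝ)/3) ^ n * Real.sqrt R1 := by positivity
            calc 3 / Real.sqrt ‖y z‖ ≤ 3 / (((4:ℝ)/3) ^ n * Real.sqrt R1) :=
                  div_le_div_of_nonneg_left (by norm_num) hpos2 hgeq
              _ = (3 / Real.sqrt R1) * (3/4 : ℝ) ^ n := by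
                  rw [div_mul_eq_div_div, div_pow]
                  field_simp
                  rw [← mul_pow]; norm_num
          have e3 : (12 / Real.sqrt R1) * (1 - (3/4:ℝ) ^ (n+1)) =
              (3 / Real.sqrt R1) * (3/4:ℝ) ^ n
                + (12 / Real.sqrt R1) * (1 - (3/4:ℝ) ^ n) := by
            rw [pow_succ]
            field_simp
            ring
          rw [e3]
          linarith
    -- compactness gives a bound, contradiction
    obtain ⟨zm, _, hzm⟩ := (isCompact_closedBall x0 (12 / Real.sqrt R1)).exists_isMaxOn
      ⟨x0, Metric.mem_closedBall_self (by positivity)⟩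
      (hy.continuous.norm.continuousOn)
    have hbd : ∀ k : ℕ, 2 ^ k * R1 ≤ ‖y zm‖ := by
      intro k
      obtain ⟨z, hz1, hz2⟩ := hex k
      have hmem : z ∈ Metric.closedBall x0 (12 / Real.sqrt R1) := by
        rw [Metric.mem_closedBall]
        have hp34 : (0:ℝ) ≤ (3/4:ℝ) ^ k := by positivity
        have h12 : (0:ℝ) ≤ 12 / Real.sqrt R1 := by positivity
        nlinarith
      exact le_trans hz1 (hzm hmem)
    obtain ⟨k, hk⟩ := pow_unbounded_of_one_lt (‖y zm‖) (by norm_num : (1:ℝ) < 2)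
    have h2k : (0:ℝ) < 2 ^ k := pow_pos two_pos k
    have := hbd k
    nlinarith
  · -- bounded case: Liouville
    push_neg at hbig
    apply hy.exists_const_forall_eq_of_bounded
    rw [isBounded_iff_forall_norm_le]
    exact ⟨R1, by rintro z ⟨x, rfl⟩; exact (hbig x).le⟩
end

section
/- If y : ℝ → ℝ is a globally defined solution of y'' = y² + C and at some point x₀ we have y(x₀) > 0 and y'(x₀) ≠ 0, then y''(x₀) < 0. -/
open Set

private lemma mono_Ici (f f' : ℝ → ℝ) (a : ℝ)
    (hf : ∀ x ∈ Ici a, HasDerivAt f (f' x) x)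
    (h : ∀ x ∈ Ioi a, 0 ≤ f' x) : MonotoneOn f (Ici a) := by
  apply monotoneOn_of_deriv_nonneg (convex_Ici a)
  · exact fun x hx => (hf x hx).continuousAt.continuousWithinAt
  · intro x hx
    rw [interior_Ici] at hx
    exact (hf x (mem_Ici.2 (le_of_lt hx))).differentiableAt.differentiableWithinAt
  · intro x hx
    rw [interior_Ici] at hx
    rw [(hf x (mem_Ici.2 (le_of_lt hx))).deriv]
    exact h x hx

private lemma mono_Icc (f f' : ℝ → ℝ) (a b : ℝ)
    (hf : ∀ x ∈ Icc a b, HasDerivAt f (f' x) x)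
    (h : ∀ x ∈ Ioo a b, 0 ≤ f' x) : MonotoneOn f (Icc a b) := by
  apply monotoneOn_of_deriv_nonneg (convex_Icc a b)
  · exact fun x hx => (hf x hx).continuousAt.continuousWithinAt
  · intro x hx
    rw [interior_Icc] at hx
    exact (hf x (Ioo_subset_Icc_self hx)).differentiableAt.differentiableWithinAt
  · intro x hx
    rw [interior_Icc] at hx
    rw [(hf x (Ioo_subset_Icc_self hx)).deriv]
    exact h x hx

private lemma step1 (C : ℝ) (y y' : ℝ → ℝ)
    (hy : ∀ x : ℝ, HasDerivAt y (y' x) x)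
    (hy' : ∀ x : ℝ, HasDerivAt y' (y x ^ 2 + C) x)
    (x₀ : ℝ) (h₀ : 0 < y x₀) (h₁ : 0 < y' x₀) (hA : 0 ≤ y x₀ ^ 2 + C) :
    ∀ x ∈ Ici x₀, y' x₀ / 2 < y' x := by
  set v := y' x₀ with hvdef
  by_contra hcon
  push_neg at hcon
  obtain ⟨z, hz, hzle⟩ := hcon
  have hcont : Continuous y' := by
    rw [continuous_iff_continuousAt]
    exact fun x => (hy' x).continuousAt
  set s : Set ℝ := Ici x₀ ∩ y' ⁻¹' (Iic (v / 2)) with hsdef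
  have hsclosed : IsClosed s := isClosed_Ici.inter (isClosed_Iic.preimage hcont)
  have hsne : s.Nonempty := ⟨z, hz, hzle⟩
  have hsbdd : BddBelow s := ⟨x₀, fun t ht => ht.1⟩
  set b := sInf s with hbdef
  have hbmem : b ∈ s := hsclosed.csInf_mem hsne hsbdd
  have hb1 : x₀ ≤ b := hbmem.1
  have hb2 : y' b ≤ v / 2 := hbmem.2
  have hb0 : x₀ < b := by
    rcases eq_or_lt_of_le hb1 with h | h
    · exfalso; rw [← h] at hb2; simp only [← hvdef] at hb2; linarith
    · exact h
  have hlt : ∀ t ∈ Ico x₀ b, v / 2 < y' t := by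
    intro t ht
    by_contra hle
    push_neg at hle
    have : b ≤ t := csInf_le hsbdd ⟨ht.1, hle⟩
    exact absurd ht.2 (not_lt.2 this)
  -- y is monotone on [x₀, b]
  have ymono : MonotoneOn y (Icc x₀ b) := by
    apply mono_Icc y y'
    · exact fun x _ => hy x
    · intro x hx
      have := hlt x ⟨hx.1.le, hx.2⟩
      linarith
  -- y' is monotone on [x₀, b]
  have y'mono : MonotoneOn y' (Icc x₀ b) := by
    apply mono_Icc y' (fun x => y x ^ 2 + C)
    · exact fun x _ => hy' x
    · intro x hx
      have hyx : y x₀ ≤ y x :=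
        ymono (left_mem_Icc.2 hb1) ⟨hx.1.le, hx.2.le⟩ hx.1.le
      have : y x₀ ^ 2 ≤ y x ^ 2 := by nlinarith
      linarith
  have : v ≤ y' b := y'mono (left_mem_Icc.2 hb1) (right_mem_Icc.2 hb1) hb1
  linarith

private lemma blowup (C : ℝ) (y y' : ℝ → ℝ)
    (hy : ∀ x : ℝ, HasDerivAt y (y' x) x)
    (hy' : ∀ x : ℝ, HasDerivAt y' (y x ^ 2 + C) x)
    (x₀ : ℝ) (h₀ : 0 < y x₀) (h₁ : 0 < y' x₀) (hA : 0 ≤ y x₀ ^ 2 + C) :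
    False := by
  have hv := step1 C y y' hy hy' x₀ h₀ h₁ hA
  set w := y' x₀ / 2 with hwdef
  have hw : 0 < w := by positivity
  -- linear growth
  have hlin : ∀ x ∈ Ici x₀, y x₀ + w * (x - x₀) ≤ y x := by
    intro x hx
    have hmono : MonotoneOn (fun t => y t - w * t) (Ici x₀) := by
      apply mono_Ici _ (fun t => y' t - w)
      · intro t _
        have hlw : HasDerivAt (fun t : ℝ => w * t) w t := by
          simpa using (hasDerivAt_id t).const_mul w
        exact (hy t).sub hlw
      · intro t ht
        have := hv t (mem_Ici.2 (le_of_lt ht))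
        linarith
    have := hmono self_mem_Ici hx hx
    simp only at this
    linarith
  -- threshold M
  set M := Real.sqrt (max 0 (-2 * C)) + 1 with hMdef
  have hM0 : 0 < M := by positivity
  have hM : ∀ z : ℝ, M ≤ z → 0 ≤ z ^ 2 + 2 * C := by
    intro z hz
    have h1 : Real.sqrt (max 0 (-2 * C)) ≤ z := by linarith
    have h2 : max 0 (-2 * C) ≤ z ^ 2 := by
      calc max 0 (-2 * C) = Real.sqrt (max 0 (-2 * C)) ^ 2 :=
            (Real.sq_sqrt (le_max_left _ _)).symm
        _ ≤ z ^ 2 := by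
            apply pow_le_pow_left₀ (Real.sqrt_nonneg _) h1
    have h3 := le_max_right 0 (-2 * C)
    linarith
  set x₁ := x₀ + M / w with hx₁def
  have hx₁ : x₀ ≤ x₁ := by
    rw [hx₁def]
    have : 0 ≤ M / w := by positivity
    linarith
  have hyx₁ : M ≤ y x₁ := by
    have := hlin x₁ hx₁
    rw [hx₁def] at this
    rw [show x₀ + M / w - x₀ = M / w by ring] at this
    rw [mul_div_cancel₀ _ (ne_of_gt hw)] at this
    linarith
  -- y is monotone on Ici x₀
  have ymono : MonotoneOn y (Ici x₀) := by
    apply mono_Ici y y' x₀ (fun x _ => hy x)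
    intro x hx
    have := hv x (mem_Ici.2 (le_of_lt hx))
    linarith
  have hylarge : ∀ x ∈ Ici x₁, M ≤ y x := by
    intro x hx
    exact le_trans hyx₁ (ymono (mem_Ici.2 hx₁) (mem_Ici.2 (le_trans hx₁ hx)) hx)
  -- energy F = y'^2 - y^3/3 monotone on Ici x₁
  have hF : MonotoneOn (fun x => y' x ^ 2 - y x ^ 3 / 3) (Ici x₁) := by
    apply mono_Ici _ (fun x => 2 * y' x ^ 1 * (y x ^ 2 + C) - 3 * y x ^ 2 * y' x / 3)
    · intro x _
      exact ((hy' x).pow 2).sub (((hy x).pow 3).div_const 3)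
    · intro x hx
      have h1 : M ≤ y x := hylarge x (mem_Ici.2 (le_of_lt hx))
      have h2 := hM (y x) h1
      have h3 : 0 < y' x := lt_trans (by positivity) (hv x (le_trans hx₁ (le_of_lt hx)))
      have : 2 * y' x ^ 1 * (y x ^ 2 + C) - 3 * y x ^ 2 * y' x / 3
          = y' x * (y x ^ 2 + 2 * C) := by ring
      rw [this]
      exact mul_nonneg h3.le h2
  have hFx : ∀ x ∈ Ici x₁, y x ^ 3 / 3 - y x₁ ^ 3 / 3 ≤ y' x ^ 2 := by
    intro x hx
    have := hF self_mem_Ici hx hx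
    simp only at this
    nlinarith [sq_nonneg (y' x₁)]
  set x₂ := x₀ + 2 * y x₁ / w with hx₂def
  have hyx₁pos : 0 < y x₁ := lt_of_lt_of_le hM0 hyx₁
  have hx₂₁ : x₁ ≤ x₂ := by
    rw [hx₁def, hx₂def]
    have : M / w ≤ 2 * y x₁ / w := by
      apply div_le_div_of_nonneg_right ?_ hw.le
      linarith
    linarith
  have hx₂₀ : x₀ ≤ x₂ := le_trans hx₁ hx₂₁
  have hy2 : ∀ x ∈ Ici x₂, 2 * y x₁ ≤ y x := by
    intro x hx
    have h1 := hlin x (le_trans hx₂₀ hx)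
    have h2 : 2 * y x₁ / w ≤ x - x₀ := by
      rw [hx₂def] at hx
      simp only [mem_Ici] at hx
      linarith
    have h3 : w * (2 * y x₁ / w) ≤ w * (x - x₀) :=
      mul_le_mul_of_nonneg_left h2 hw.le
    rw [mul_div_cancel₀ _ (ne_of_gt hw)] at h3
    linarith
  -- key bound: y' ≥ y √y / 3 on Ici x₂
  have hypos : ∀ x ∈ Ici x₂, 0 < y x := by
    intro x hx
    have := hy2 x hx
    linarith
  have key : ∀ x ∈ Ici x₂, y x * Real.sqrt (y x) / 3 ≤ y' x := by
    intro x hx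
    have h2 : 2 * y x₁ ≤ y x := hy2 x hx
    have hyx : 0 < y x := hypos x hx
    have hFx' : y x ^ 3 / 3 - y x₁ ^ 3 / 3 ≤ y' x ^ 2 :=
      hFx x (le_trans hx₂₁ hx)
    have hcube : (2 * y x₁) ^ 3 ≤ y x ^ 3 := by
      apply pow_le_pow_left₀ (by positivity) h2
    set s := Real.sqrt (y x) with hsdef
    have hs2 : s ^ 2 = y x := Real.sq_sqrt hyx.le
    have hspos : 0 < s := Real.sqrt_pos.2 hyx
    have hy'pos : 0 < y' x :=
      lt_trans (by positivity) (hv x (le_trans hx₂₀ hx))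
    -- (y x * s)^2 = y x ^ 3 and 9 * y' x ^2 ≥ y x ^3
    have h9 : (y x * s) ^ 2 ≤ (3 * y' x) ^ 2 := by nlinarith
    have habs : y x * s ≤ 3 * y' x := by nlinarith [mul_pos hyx hspos]
    linarith
  -- g = 1/√y decreases with slope ≤ -1/6 on Ici x₂, contradiction
  set g := fun x => (Real.sqrt (y x))⁻¹ with hgdef
  have hgd : ∀ x ∈ Ici x₂, HasDerivAt g
      (-(1 / (2 * Real.sqrt (y x)) * y' x) / Real.sqrt (y x) ^ 2) x := by
    intro x hx
    have hyx : 0 < y x := hypos x hx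
    have h1 : HasDerivAt (fun t => Real.sqrt (y t))
        (1 / (2 * Real.sqrt (y x)) * y' x) x :=
      (Real.hasDerivAt_sqrt (ne_of_gt hyx)).comp x (hy x)
    exact h1.inv (ne_of_gt (Real.sqrt_pos.2 hyx))
  have hmonoF : MonotoneOn (fun x => -(g x) - x / 6) (Ici x₂) := by
    apply mono_Ici _ (fun x =>
      -(-(1 / (2 * Real.sqrt (y x)) * y' x) / Real.sqrt (y x) ^ 2) - 1 / 6)
    · intro x hx
      exact ((hgd x hx).neg).sub ((hasDerivAt_id x).div_const 6)
    · intro x hx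
      have hyx : 0 < y x := hypos x (mem_Ici.2 (le_of_lt hx))
      set s := Real.sqrt (y x) with hsdef
      have hs2 : s ^ 2 = y x := Real.sq_sqrt hyx.le
      have hspos : 0 < s := Real.sqrt_pos.2 hyx
      have hk := key x (mem_Ici.2 (le_of_lt hx))
      have hsne : s ≠ 0 := ne_of_gt hspos
      have hexp : -(-(1 / (2 * s) * y' x) / s ^ 2) = y' x / (2 * s ^ 3) := by
        rw [neg_div, neg_neg]
        rw [div_eq_div_iff (by positivity) (by positivity)]
        field_simp
      rw [hexp]
      rw [sub_nonneg, div_le_div_iff₀ (by norm_num) (by positivity)]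
      -- 1 * (2 * s^3) ≤ y' x * 6
      have hs3 : s ^ 3 = y x * s := by
        rw [show s ^ 3 = s ^ 2 * s by ring, hs2]
      rw [hs3]
      nlinarith
  set X := x₂ + 6 * g x₂ + 6 with hXdef
  have hgx₂ : 0 ≤ g x₂ := by
    rw [hgdef]
    positivity
  have hX : x₂ ≤ X := by rw [hXdef]; linarith
  have hfin := hmonoF self_mem_Ici (mem_Ici.2 hX) hX
  simp only at hfin
  have hgX : 0 < g X := by
    rw [hgdef]
    simp only
    have := hypos X (mem_Ici.2 hX)
    positivity
  rw [hXdef] at hfin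
  linarith

private lemma reflect (C : ℝ) (y y' : ℝ → ℝ)
    (hy : ∀ x : ℝ, HasDerivAt y (y' x) x)
    (hy' : ∀ x : ℝ, HasDerivAt y' (y x ^ 2 + C) x)
    (x₀ : ℝ) (h₀ : 0 < y x₀) (h₁ : y' x₀ < 0) (hA : 0 ≤ y x₀ ^ 2 + C) :
    False := by
  set Y : ℝ → ℝ := fun x => y (2 * x₀ - x) with hYdef
  set Y' : ℝ → ℝ := fun x => -y' (2 * x₀ - x) with hY'def
  have hr : ∀ x : ℝ, HasDerivAt (fun t : ℝ => 2 * x₀ - t) (-1 : ℝ) x := by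
    intro x
    exact (hasDerivAt_id' x).const_sub (2 * x₀)
  have hY : ∀ x : ℝ, HasDerivAt Y (Y' x) x := by
    intro x
    have := (hy (2 * x₀ - x)).comp x (hr x)
    simpa [hYdef, hY'def, mul_comm, Function.comp_def] using this
  have hY' : ∀ x : ℝ, HasDerivAt Y' (Y x ^ 2 + C) x := by
    intro x
    have := ((hy' (2 * x₀ - x)).comp x (hr x)).neg
    simpa [hYdef, hY'def, Function.comp_def, Pi.neg_def] using this
  apply blowup C Y Y' hY hY' x₀
  · have e : 2 * x₀ - x₀ = x₀ := by ring
    simpa [hYdef, e] using h₀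
  · simp only [hY'def]
    rw [show 2 * x₀ - x₀ = x₀ by ring]
    linarith
  · have e : 2 * x₀ - x₀ = x₀ := by ring
    simpa [hYdef, e] using hA

/-- If `y : ℝ → ℝ` is a globally defined solution of `y'' = y² + C` and at some
point `x₀` we have `y x₀ > 0` and `y' x₀ ≠ 0`, then `y'' x₀ < 0`. -/
theorem stmt_1 (C : ℝ) (y y' : ℝ → ℝ)
    (hy : ∀ x : ℝ, HasDerivAt y (y' x) x)
    (hy' : ∀ x : ℝ, HasDerivAt y' (y x ^ 2 + C) x)
    (x₀ : ℝ) (h₀ : y x₀ > 0) (h₁ : y' x₀ ≠ 0) :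
    y x₀ ^ 2 + C < 0 := by
  by_contra hA
  push_neg at hA
  rcases lt_or_gt_of_ne h₁ with h | h
  · exact reflect C y y' hy hy' x₀ h₀ h hA
  · exact blowup C y y' hy hy' x₀ h₀ h hA
end

section
/- If y : ℝ → ℝ is a globally defined solution of y'' = y² + C with y(x₀) > 0, y'(x₀) > 0, and y(x₀)² + C ≥ 0 at some x₀, then y(x) → ∞ as x → ∞. -/
open Filter Set

/-- If `y : ℝ → ℝ` is a globally defined solution of `y'' = y² + C` with
`y x₀ > 0`, `y' x₀ > 0` and `y x₀ ^ 2 + C ≥ 0` at some point `x₀`, then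
`y x → ∞` as `x → ∞`. -/
theorem stmt_3 (C : ℝ) (y y' : ℝ → ℝ)
    (hy : ∀ x : ℝ, HasDerivAt y (y' x) x)
    (hy' : ∀ x : ℝ, HasDerivAt y' (y x ^ 2 + C) x)
    (x₀ : ℝ) (h₀ : y x₀ > 0) (h₁ : y' x₀ > 0) (h₂ : y x₀ ^ 2 + C ≥ 0) :
    Filter.Tendsto y Filter.atTop Filter.atTop := by
  have hyc : Continuous y := continuous_iff_continuousAt.2 fun x => (hy x).continuousAt
  have hy'c : Continuous y' := continuous_iff_continuousAt.2 fun x => (hy' x).continuousAt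
  have hderiv : ∀ x, deriv y x = y' x := fun x => (hy x).deriv
  have hderiv' : ∀ x, deriv y' x = y x ^ 2 + C := fun x => (hy' x).deriv
  -- key: y' is positive on [x₀, ∞)
  have key : ∀ x, x₀ ≤ x → 0 < y' x := by
    by_contra hcon
    push_neg at hcon
    obtain ⟨a, hax, ha⟩ := hcon
    set s : Set ℝ := Ici x₀ ∩ y' ⁻¹' Iic 0 with hs
    have hsc : IsClosed s := isClosed_Ici.inter (isClosed_Iic.preimage hy'c)
    have hsne : s.Nonempty := ⟨a, hax, ha⟩
    have hsbd : BddBelow s := ⟨x₀, fun t ht => ht.1⟩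
    set b := sInf s with hb
    have hbs : b ∈ s := hsc.csInf_mem hsne hsbd
    have hbx : x₀ ≤ b := hbs.1
    have hby' : y' b ≤ 0 := hbs.2
    have hbne : x₀ < b := lt_of_le_of_ne hbx (fun h => absurd hby' (not_le.2 (h ▸ h₁)))
    have hIco : ∀ t ∈ Ico x₀ b, 0 < y' t := by
      intro t ht
      by_contra h
      push_neg at h
      exact absurd (csInf_le hsbd ⟨ht.1, h⟩) (not_le.2 ht.2)
    have hmono : StrictMonoOn y (Icc x₀ b) :=
      strictMonoOn_of_deriv_pos (convex_Icc _ _) hyc.continuousOn (fun t ht => by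
        rw [interior_Icc] at ht
        rw [hderiv]
        exact hIco t ⟨ht.1.le, ht.2⟩)
    have hyge : ∀ t ∈ Icc x₀ b, y x₀ ≤ y t := by
      intro t ht
      rcases eq_or_lt_of_le ht.1 with h | h
      · rw [← h]
      · exact (hmono (left_mem_Icc.2 hbx) ht h).le
    have hmono' : MonotoneOn y' (Icc x₀ b) := by
      refine monotoneOn_of_deriv_nonneg (convex_Icc _ _) hy'c.continuousOn
        (fun t _ => (hy' t).differentiableAt.differentiableWithinAt) ?_
      intro t ht
      rw [interior_Icc] at ht
      rw [hderiv']
      have h1 : y x₀ ≤ y t := hyge t ⟨ht.1.le, ht.2.le⟩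
      have : y x₀ ^ 2 ≤ y t ^ 2 := by nlinarith
      linarith
    have := hmono' (left_mem_Icc.2 hbx) (right_mem_Icc.2 hbx) hbx
    linarith
  -- hence y is monotone on [x₀, ∞), so y x ≥ y x₀ there
  have hymono : MonotoneOn y (Ici x₀) := by
    refine monotoneOn_of_deriv_nonneg (convex_Ici _) hyc.continuousOn
      (fun t _ => (hy t).differentiableAt.differentiableWithinAt) ?_
    intro t ht
    rw [interior_Ici] at ht
    rw [hderiv]
    exact (key t ht.le).le
  have hyge : ∀ x, x₀ ≤ x → y x₀ ≤ y x := fun x hx =>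
    hymono self_mem_Ici hx hx
  -- hence y' is monotone on [x₀, ∞), so y' x ≥ y' x₀ there
  have hy'mono : MonotoneOn y' (Ici x₀) := by
    refine monotoneOn_of_deriv_nonneg (convex_Ici _) hy'c.continuousOn
      (fun t _ => (hy' t).differentiableAt.differentiableWithinAt) ?_
    intro t ht
    rw [interior_Ici] at ht
    rw [hderiv']
    have h1 : y x₀ ≤ y t := hyge t ht.le
    have : y x₀ ^ 2 ≤ y t ^ 2 := by nlinarith
    linarith
  -- linear lower bound
  have hlin : ∀ x, x₀ ≤ x → y x₀ + y' x₀ * (x - x₀) ≤ y x := by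
    intro x hx
    have hg : MonotoneOn (fun t => y t - y' x₀ * t) (Ici x₀) := by
      refine monotoneOn_of_deriv_nonneg (convex_Ici _)
        (hyc.sub (continuous_const.mul continuous_id)).continuousOn
        (fun t _ => (((hy t).sub ((hasDerivAt_id t).const_mul
          (y' x₀))).differentiableAt).differentiableWithinAt) ?_
      intro t ht
      rw [interior_Ici] at ht
      have : HasDerivAt (fun t => y t - y' x₀ * t) (y' t - y' x₀ * 1) t :=
        (hy t).sub ((hasDerivAt_id t).const_mul _)
      rw [this.deriv]
      have := hy'mono self_mem_Ici (show x₀ < t from ht).le (show x₀ < t from ht).le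
      linarith
    have := hg self_mem_Ici hx hx
    simp only at this
    linarith
  apply tendsto_atTop_mono' _ (eventually_ge_atTop x₀ |>.mono hlin)
  have : Tendsto (fun x : ℝ => x - x₀) atTop atTop := tendsto_atTop_add_const_right _ _ tendsto_id
  exact tendsto_atTop_add_const_left _ _ (this.const_mul_atTop h₁)
end

section
/- The only entire functions t : ℂ → ℂ satisfying t' = a·t² − 1/2 for a nonzero constant a are constant functions (and for a constant t, the equation forces a·t² = 1/2). -/
open Set Filter Topology

private lemma linear_ode' {k : ℂ} {u : ℂ → ℂ} (hu : Differentiable ℂ u)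
    (h : ∀ x, deriv u x = k * u x) (x : ℂ) : u x = u 0 * Complex.exp (k * x) := by
  have hw : ∀ y : ℂ, deriv (fun z => u z * Complex.exp (-k * z)) y = 0 := by
    intro y
    have h1 : HasDerivAt (fun z : ℂ => Complex.exp (-k * z))
        (Complex.exp (-k * y) * (-k)) y := by
      simpa [mul_comm] using ((hasDerivAt_id y).const_mul (-k)).cexp
    have h2 : HasDerivAt (fun z => u z * Complex.exp (-k * z)) _ y := (hu y).hasDerivAt.mul h1
    rw [h2.deriv, h y]
    ring
  have hwd : Differentiable ℂ (fun z => u z * Complex.exp (-k * z)) := by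
    apply hu.mul
    apply Complex.differentiable_exp.comp
    fun_prop
  have hcon := is_const_of_deriv_eq_zero hwd hw x 0
  simp only [mul_zero, Complex.exp_zero, mul_one] at hcon
  calc u x = u x * (Complex.exp (-k * x) * Complex.exp (k * x)) := by
        rw [← Complex.exp_add]; simp
    _ = (u x * Complex.exp (-k * x)) * Complex.exp (k * x) := by ring
    _ = u 0 * Complex.exp (k * x) := by rw [hcon]

/-- The only entire functions `t : ℂ → ℂ` satisfying `t' = a t² − 1/2` for a
nonzero constant `a` are constants, and a constant solution satisfies
`a t² = 1/2`. -/
theorem stmt_4 (a : ℂ) (ha : a ≠ 0) (t : ℂ → ℂ) (ht : Differentiable ℂ t)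
    (hode : ∀ x : ℂ, deriv t x = a * t x ^ 2 - 1 / 2) :
    (∃ c : ℂ, ∀ x : ℂ, t x = c) ∧ ∀ x : ℂ, a * t x ^ 2 = 1 / 2 := by
  obtain ⟨r, hr⟩ : ∃ r : ℂ, r ^ 2 = 1 / (2 * a) :=
    IsAlgClosed.exists_pow_nat_eq _ zero_lt_two
  have har : a * r ^ 2 = 1 / 2 := by rw [hr]; field_simp
  have hr0 : r ≠ 0 := by
    intro h; rw [h] at har; norm_num at har
  -- Step 1: t hits a root of a y² = 1/2 somewhere.
  have key : ∃ x₀ : ℂ, a * t x₀ ^ 2 = 1 / 2 := by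
    by_contra hno
    push_neg at hno
    have htr : ∀ x, t x ≠ r := fun x h => hno x (by rw [h]; exact har)
    have htr' : ∀ x, t x + r ≠ 0 := by
      intro x h
      apply hno x
      have h2 : t x = -r := by linear_combination h
      rw [h2]; linear_combination har
    set u : ℂ → ℂ := fun x => (t x - r) / (t x + r) with hu_def
    have hud : Differentiable ℂ u := (ht.sub_const r).div (ht.add_const r) htr'
    have hude : ∀ x, deriv u x = (2 * a * r) * u x := by
      intro x
      have hdt : deriv t x = a * (t x - r) * (t x + r) := by
        rw [hode]; linear_combination har
      have hd : HasDerivAt u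
          ((deriv t x * (t x + r) - (t x - r) * deriv t x) / (t x + r) ^ 2) x :=
        ((ht x).hasDerivAt.sub_const r).div ((ht x).hasDerivAt.add_const r) (htr' x)
      rw [hd.deriv, hdt, hu_def]
      have h2 := htr' x
      field_simp
      ring
    have hu0 : u 0 ≠ 0 := div_ne_zero (sub_ne_zero.mpr (htr 0)) (htr' 0)
    have hk : (2 : ℂ) * a * r ≠ 0 := mul_ne_zero (mul_ne_zero two_ne_zero ha) hr0
    set x₁ := Complex.log (u 0)⁻¹ / (2 * a * r) with hx1
    have he : Complex.exp (2 * a * r * x₁) = (u 0)⁻¹ := by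
      rw [hx1, mul_div_cancel₀ _ hk]
      exact Complex.exp_log (inv_ne_zero hu0)
    have hu1 : u x₁ = 1 := by
      rw [linear_ode' hud hude x₁, he, mul_inv_cancel₀ hu0]
    have heq : t x₁ - r = t x₁ + r := by
      have h2 := htr' x₁
      rw [hu_def] at hu1
      field_simp at hu1
      exact hu1
    exact hr0 (by linear_combination (-(1 : ℂ)/2) * heq)
  obtain ⟨x₀, hx₀⟩ := key
  set c := t x₀ with hc
  -- Step 2: ODE uniqueness along a real segment through x₀.
  set f : ℝ → ℂ := fun s => t (x₀ + s) with hf_def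
  have hfc : Continuous f := ht.continuous.comp (by fun_prop)
  have hfd : ∀ s : ℝ, HasDerivAt f (a * (f s) ^ 2 - 1 / 2) s := by
    intro s
    have h1 : HasDerivAt (t ∘ fun z : ℂ => x₀ + z) (deriv t (x₀ + s) * 1) (s : ℂ) :=
      HasDerivAt.comp _ (ht _).hasDerivAt ((hasDerivAt_id _).const_add x₀)
    have h2 := h1.comp_ofReal
    simpa [hf_def, Function.comp, hode] using h2
  obtain ⟨R, hR⟩ := (isCompact_Icc : IsCompact (Icc (-1 : ℝ) 1)).exists_bound_of_continuousOn
    hfc.continuousOn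
  set R' := max R ‖c‖ with hR'
  have hR'0 : (0 : ℝ) ≤ R' := le_trans (norm_nonneg c) (le_max_right _ _)
  have hc0 : a * c ^ 2 - 1 / 2 = 0 := by rw [hx₀]; ring
  have hv : ∀ s : ℝ, LipschitzOnWith (Real.toNNReal (‖a‖ * (2 * R')))
      (fun y : ℂ => a * y ^ 2 - 1 / 2) (Metric.closedBall 0 R') := by
    intro s
    apply LipschitzOnWith.of_dist_le_mul
    intro y hy z hz
    rw [mem_closedBall_zero_iff] at hy hz
    rw [dist_eq_norm, dist_eq_norm]
    have h1 : (a * y ^ 2 - 1 / 2) - (a * z ^ 2 - 1 / 2) = a * (y + z) * (y - z) := by ring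
    rw [h1, Real.coe_toNNReal _ (by positivity), norm_mul, norm_mul]
    have h2 : ‖y + z‖ ≤ 2 * R' := le_trans (norm_add_le y z) (by linarith)
    have h3 : (0 : ℝ) ≤ ‖a‖ := norm_nonneg a
    have h4 : (0 : ℝ) ≤ ‖y - z‖ := norm_nonneg _
    exact mul_le_mul_of_nonneg_right (mul_le_mul_of_nonneg_left h2 h3) h4
  have huniq : EqOn f (fun _ => c) (Icc (-1 : ℝ) 1) := by
    apply ODE_solution_unique_of_mem_Icc (v := fun _ y => a * y ^ 2 - 1 / 2)
      (s := fun _ => Metric.closedBall (0 : ℂ) R') (fun s _ => hv s)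
      (show (0 : ℝ) ∈ Ioo (-1 : ℝ) 1 by norm_num)
      hfc.continuousOn (fun s _ => hfd s)
      (fun s hs => mem_closedBall_zero_iff.mpr
        (le_trans (hR _ (Ioo_subset_Icc_self hs)) (le_max_left _ _)))
      continuousOn_const
      (fun s _ => by
        have h0 := hasDerivAt_const (𝕜 := ℝ) s c
        rw [← hc0] at h0
        exact h0)
      (fun s _ => mem_closedBall_zero_iff.mpr (le_max_right _ _))
      (by simp [hf_def, hc])
  -- Step 3: identity theorem.
  have hfreq : ∃ᶠ z in 𝓝[≠] x₀, t z = c := by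
    have hseq : Tendsto (fun n : ℕ => x₀ + ((1 / (n + 1) : ℝ) : ℂ)) atTop (𝓝[≠] x₀) := by
      rw [tendsto_nhdsWithin_iff]
      constructor
      · have h1 : Tendsto (fun n : ℕ => ((1 / (n + 1) : ℝ) : ℂ)) atTop (𝓝 ((0 : ℝ) : ℂ)) :=
          (Complex.continuous_ofReal.tendsto 0).comp tendsto_one_div_add_atTop_nhds_zero_nat
        simpa using tendsto_const_nhds.add h1
      · filter_upwards with n
        intro h
        rw [mem_singleton_iff] at h
        have h2 : ((1 / (n + 1) : ℝ) : ℂ) = 0 := by linear_combination h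
        have h3 : (0 : ℝ) < 1 / (n + 1) := by positivity
        exact h3.ne' (by exact_mod_cast h2)
    apply hseq.frequently
    apply Filter.Eventually.frequently
    filter_upwards with n
    have hmem : (1 / (n + 1) : ℝ) ∈ Icc (-1 : ℝ) 1 := by
      constructor
      · have : (0 : ℝ) < 1 / (n + 1) := by positivity
        linarith
      · rw [div_le_one (by positivity)]
        have := Nat.cast_nonneg (α := ℝ) n
        linarith
    exact huniq hmem
  have hanal : AnalyticOnNhd ℂ t univ := fun z _ => ht.analyticAt z
  have hconst : t = fun _ => c :=
    hanal.eq_of_frequently_eq (analyticOnNhd_const) hfreq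
  refine ⟨⟨c, fun x => by rw [hconst]⟩, fun x => ?_⟩
  rw [show t x = c from by rw [hconst]]
  exact hx₀
end

section
/- For the special case 𝔤 = 𝔰𝔩(2,ℂ) acting on the irreducible (n+1)-dimensional representation V_n: if τ ∈ V_n* ⊗ V_n* satisfies τ(x, A·y) = τ(y, A·x) for all x,y and A ∈ 𝔰𝔩(2,ℂ), then τ = 0 when n is even, and τ is a scalar multiple of the invariant symplectic 2-form when n is odd. -/
open Matrix

/-- The operator `H` of the `(n+1)`-dimensional irreducible representation
`V_n` of `𝔰𝔩(2,ℂ)`, in the standard weight basis `v_0, …, v_n`. -/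
noncomputable def sl2H (n : ℕ) : Matrix (Fin (n + 1)) (Fin (n + 1)) ℂ :=
  Matrix.diagonal fun k => (n : ℂ) - 2 * ((k : ℕ) : ℂ)

/-- The lowering operator `F`: `F v_k = v_{k+1}` (and `F v_n = 0`). -/
noncomputable def sl2F (n : ℕ) : Matrix (Fin (n + 1)) (Fin (n + 1)) ℂ :=
  fun i j => if (i : ℕ) = (j : ℕ) + 1 then 1 else 0

/-- The raising operator `E`: `E v_k = k (n + 1 - k) v_{k-1}`. -/
noncomputable def sl2E (n : ℕ) : Matrix (Fin (n + 1)) (Fin (n + 1)) ℂ :=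
  fun i j => if (i : ℕ) + 1 = (j : ℕ) then ((j : ℕ) : ℂ) * ((n : ℂ) - (j : ℕ) + 1) else 0

/-- The (up to scale unique) `𝔰𝔩(2,ℂ)`-invariant pairing on `V_n`:
`ω(v_i, v_j) = (-1)^i` if `i + j = n`, and `0` otherwise.  For odd `n` it is
the invariant symplectic form. -/
noncomputable def sl2Omega (n : ℕ) : Matrix (Fin (n + 1)) (Fin (n + 1)) ℂ :=
  fun i j => if (i : ℕ) + (j : ℕ) = n then (-1 : ℂ) ^ (i : ℕ) else 0

private lemma sum_pick {n : ℕ} (f : Fin (n + 1) → ℂ) (c : ℕ) :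
    (∑ k : Fin (n + 1), if (k : ℕ) = c then f k else 0) =
      if h : c < n + 1 then f ⟨c, h⟩ else 0 := by
  split_ifs with h
  · rw [Finset.sum_eq_single (⟨c, h⟩ : Fin (n + 1))]
    · simp
    · intro b _ hb
      exact if_neg fun hc => hb (Fin.ext hc)
    · intro hb; exact absurd (Finset.mem_univ _) hb
  · refine Finset.sum_eq_zero fun k _ => if_neg fun hc => ?_
    have := k.isLt; omega

/-- For the irreducible `(n+1)`-dimensional representation `V_n` of
`𝔰𝔩(2,ℂ)` (with `n ≥ 1`, so that the representation is faithful): if a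
bilinear form `τ` (given by a matrix, `τ(x,y) = xᵀ τ y`) satisfies
`τ(x, A·y) = τ(y, A·x)` for all `x, y` and all `A ∈ 𝔰𝔩(2,ℂ)` — equivalently,
`τ·A` is a symmetric matrix for every `A` in the span of `E, F, H` — then
`τ = 0` when `n` is even, and `τ` is a scalar multiple of the invariant
symplectic form when `n` is odd. -/
theorem stmt_8 (n : ℕ) (hn : 1 ≤ n) (τ : Matrix (Fin (n + 1)) (Fin (n + 1)) ℂ)
    (hτ : ∀ A ∈ Submodule.span ℂ {sl2E n, sl2F n, sl2H n}, (τ * A)ᵀ = τ * A) :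
    (Even n → τ = 0) ∧ (Odd n → ∃ c : ℂ, τ = c • sl2Omega n) := by
  have hEsym' := hτ (sl2E n) (Submodule.subset_span (by simp))
  have hFsym' := hτ (sl2F n) (Submodule.subset_span (by simp))
  have hHsym' := hτ (sl2H n) (Submodule.subset_span (by simp))
  have symE : ∀ i j : Fin (n + 1), (τ * sl2E n) j i = (τ * sl2E n) i j := by
    intro i j
    have := congrFun (congrFun hEsym' i) j
    rwa [Matrix.transpose_apply] at this
  have symF : ∀ i j : Fin (n + 1), (τ * sl2F n) j i = (τ * sl2F n) i j := by
    intro i j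
    have := congrFun (congrFun hFsym' i) j
    rwa [Matrix.transpose_apply] at this
  have symH : ∀ i j : Fin (n + 1), (τ * sl2H n) j i = (τ * sl2H n) i j := by
    intro i j
    have := congrFun (congrFun hHsym' i) j
    rwa [Matrix.transpose_apply] at this
  set t : ℕ → ℕ → ℂ :=
    fun i j => if h : i < n + 1 ∧ j < n + 1 then τ ⟨i, h.1⟩ ⟨j, h.2⟩ else 0 with ht
  have tEq : ∀ i j : Fin (n + 1), t (i : ℕ) (j : ℕ) = τ i j := by
    intro i j
    simp only [ht]; rw [dif_pos ⟨i.isLt, j.isLt⟩]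
  have h0 : ∀ i j : ℕ, n + 1 ≤ i ∨ n + 1 ≤ j → t i j = 0 := by
    intro i j hij
    simp only [ht]
    rw [dif_neg (by omega)]
  -- entry formulas
  have mulH : ∀ i j : Fin (n + 1),
      (τ * sl2H n) i j = ((n : ℂ) - 2 * ((j : ℕ) : ℂ)) * t (i : ℕ) (j : ℕ) := by
    intro i j
    rw [sl2H, Matrix.mul_diagonal, tEq]
    ring
  have mulF : ∀ i j : Fin (n + 1), (τ * sl2F n) i j = t (i : ℕ) ((j : ℕ) + 1) := by
    intro i j
    rw [Matrix.mul_apply]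
    have hsum : (∑ k, τ i k * sl2F n k j)
        = ∑ k : Fin (n + 1), if (k : ℕ) = (j : ℕ) + 1 then τ i k else 0 := by
      refine Finset.sum_congr rfl fun k _ => ?_
      simp only [sl2F]
      by_cases hk : (k : ℕ) = (j : ℕ) + 1
      · rw [if_pos hk, if_pos hk, mul_one]
      · rw [if_neg hk, if_neg hk, mul_zero]
    rw [hsum, sum_pick]
    by_cases h : (j : ℕ) + 1 < n + 1
    · rw [dif_pos h]
      simp only [ht]; rw [dif_pos ⟨i.isLt, h⟩]
    · rw [dif_neg h]
      rw [h0 _ _ (Or.inr (by omega))]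
  have mulE : ∀ i j : Fin (n + 1),
      (τ * sl2E n) i j
        = ((j : ℕ) : ℂ) * ((n : ℂ) - ((j : ℕ) : ℂ) + 1) * t (i : ℕ) ((j : ℕ) - 1) := by
    intro i j
    rw [Matrix.mul_apply]
    rcases Nat.eq_zero_or_pos (j : ℕ) with hj | hj
    · have hz : ∀ k : Fin (n + 1), τ i k * sl2E n k j = 0 := by
        intro k
        simp [sl2E, hj]
      rw [Finset.sum_congr rfl fun k _ => hz k, Finset.sum_const_zero, hj]
      norm_num
    · obtain ⟨m, hm⟩ : ∃ m, (j : ℕ) = m + 1 := ⟨(j : ℕ) - 1, by omega⟩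
      have hsum : (∑ k, τ i k * sl2E n k j)
          = ∑ k : Fin (n + 1), if (k : ℕ) = m then
              (((j : ℕ) : ℂ) * ((n : ℂ) - ((j : ℕ) : ℂ) + 1)) * τ i k else 0 := by
        refine Finset.sum_congr rfl fun k _ => ?_
        simp only [sl2E]
        by_cases hk : (k : ℕ) = m
        · rw [if_pos (by omega), if_pos hk]; ring
        · rw [if_neg (by omega), if_neg hk, mul_zero]
      rw [hsum, sum_pick, dif_pos (show m < n + 1 by omega)]
      have hmt : t (i : ℕ) ((j : ℕ) - 1) = τ i ⟨m, by omega⟩ := by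
        rw [show (j : ℕ) - 1 = m from by omega]
        simp only [ht]; rw [dif_pos ⟨i.isLt, show m < n + 1 by omega⟩]
      rw [hmt]
  -- ℕ-level relations
  have hHn : ∀ i j : ℕ,
      ((n : ℂ) - 2 * (i : ℂ)) * t j i = ((n : ℂ) - 2 * (j : ℂ)) * t i j := by
    intro i j
    by_cases hi : i < n + 1
    · by_cases hj : j < n + 1
      · have h := symH ⟨i, hi⟩ ⟨j, hj⟩
        rw [mulH, mulH] at h
        exact h
      · rw [h0 j i (Or.inl (by omega)), h0 i j (Or.inr (by omega)), mul_zero, mul_zero]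
    · rw [h0 j i (Or.inr (by omega)), h0 i j (Or.inl (by omega)), mul_zero, mul_zero]
  have hFn : ∀ i j : ℕ, t j (i + 1) = t i (j + 1) := by
    intro i j
    by_cases hi : i < n + 1
    · by_cases hj : j < n + 1
      · have h := symF ⟨i, hi⟩ ⟨j, hj⟩
        rw [mulF, mulF] at h
        exact h
      · rw [h0 j (i + 1) (Or.inl (by omega)), h0 i (j + 1) (Or.inr (by omega))]
    · rw [h0 j (i + 1) (Or.inr (by omega)), h0 i (j + 1) (Or.inl (by omega))]
  have hEn : ∀ i j : ℕ,
      ((i : ℂ) + 1) * ((n : ℂ) - (i : ℂ)) * t (j + 1) i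
        = ((j : ℂ) + 1) * ((n : ℂ) - (j : ℂ)) * t (i + 1) j := by
    intro i j
    by_cases hi : i + 1 < n + 1
    · by_cases hj : j + 1 < n + 1
      · have h := symE ⟨i + 1, hi⟩ ⟨j + 1, hj⟩
        rw [mulE, mulE] at h
        simp only [Nat.add_sub_cancel] at h
        push_cast at h ⊢
        linear_combination h
      · rw [h0 (j + 1) i (Or.inl (by omega)), mul_zero]
        by_cases hjn : j = n
        · have hz : (n : ℂ) - (j : ℂ) = 0 := by rw [hjn, sub_self]
          rw [hz, mul_zero, zero_mul]
        · rw [h0 (i + 1) j (Or.inr (by omega)), mul_zero]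
    · rw [h0 (i + 1) j (Or.inl (by omega)), mul_zero]
      by_cases hin : i = n
      · have hz : (n : ℂ) - (i : ℂ) = 0 := by rw [hin, sub_self]
        rw [hz, mul_zero, zero_mul]
      · rw [h0 (j + 1) i (Or.inr (by omega)), mul_zero]
  have hE0 : ∀ j : ℕ, j < n → t 0 j = 0 := by
    intro j hj
    have h := symE ⟨0, by omega⟩ ⟨j + 1, by omega⟩
    rw [mulE, mulE] at h
    simp only [Nat.add_sub_cancel, Nat.cast_zero, zero_mul] at h
    have hc1 : ((j : ℂ) + 1) ≠ 0 := by
      intro hc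
      exact Nat.cast_add_one_ne_zero j (by linear_combination hc)
    have hc2 : ((n : ℂ) - (j : ℂ)) ≠ 0 := by
      intro hc
      have : ((n - j : ℕ) : ℂ) = 0 := by
        rw [Nat.cast_sub hj.le]; linear_combination hc
      exact Nat.sub_ne_zero_of_lt hj (by exact_mod_cast this)
    have h2 : ((j : ℂ) + 1) * ((n : ℂ) - (j : ℂ)) * t 0 j = 0 := by
      push_cast at h
      linear_combination -h
    rcases mul_eq_zero.mp h2 with h3 | h3
    · exact absurd h3 (mul_ne_zero hc1 hc2)
    · exact h3
  -- helper nonvanishing facts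
  have hnC : (n : ℂ) ≠ 0 := Nat.cast_ne_zero.mpr (by omega)
  have hc1 : ∀ a : ℕ, ((a : ℂ) + 1) ≠ 0 := fun a => Nat.cast_add_one_ne_zero a
  have hc2 : ∀ b : ℕ, b < n → ((n : ℂ) - (b : ℂ)) ≠ 0 := by
    intro b hb hc
    have : ((n - b : ℕ) : ℂ) = 0 := by
      rw [Nat.cast_sub hb.le]; linear_combination hc
    exact Nat.sub_ne_zero_of_lt hb (by exact_mod_cast this)
  have hc3 : ∀ a : ℕ, ((a : ℂ) + 2) ≠ 0 := by
    intro a hc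
    exact hc1 (a + 1) (by push_cast; linear_combination hc)
  have hc4 : ∀ a : ℕ, a + 1 < n → ((n : ℂ) - (a : ℂ) - 1) ≠ 0 := by
    intro a ha hc
    exact hc2 (a + 1) ha (by push_cast; linear_combination hc)
  -- the combined E+F two-step relation on anti-diagonals
  have R : ∀ a b : ℕ,
      ((a : ℂ) + 2) * ((n : ℂ) - (a : ℂ) - 1) * t a (b + 2)
        = ((b : ℂ) + 1) * ((n : ℂ) - (b : ℂ)) * t (a + 2) b := by
    intro a b
    have h1 := hEn (a + 1) b
    rw [hFn a (b + 1)] at h1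
    push_cast at h1 ⊢
    linear_combination h1
  -- below the anti-diagonal
  have AscL : ∀ k b : ℕ, 2 * k + b < n → t (2 * k) b = 0 := by
    intro k
    induction k with
    | zero => intro b hb; exact hE0 b (by omega)
    | succ k ih =>
      intro b hb
      have h1 := R (2 * k) b
      rw [ih (b + 2) (by omega), mul_zero] at h1
      have hne : ((b : ℂ) + 1) * ((n : ℂ) - (b : ℂ)) ≠ 0 :=
        mul_ne_zero (hc1 b) (hc2 b (by omega))
      have h2 := (mul_eq_zero.mp h1.symm).resolve_left hne
      rw [show 2 * (k + 1) = 2 * k + 2 by ring]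
      exact h2
  have DescL : ∀ k a : ℕ, a + 2 * k < n → t a (2 * k) = 0 := by
    intro k
    induction k with
    | zero =>
      intro a ha
      have h1 := hHn a 0
      rw [hE0 a (by omega), mul_zero] at h1
      have hne : ((n : ℂ) - 2 * ((0 : ℕ) : ℂ)) ≠ 0 := by
        intro hc; exact hnC (by push_cast at hc ⊢; linear_combination hc)
      exact (mul_eq_zero.mp h1.symm).resolve_left hne
    | succ k ih =>
      intro a ha
      have h1 := R a (2 * k)
      rw [ih (a + 2) (by omega), mul_zero] at h1
      have hne : ((a : ℂ) + 2) * ((n : ℂ) - (a : ℂ) - 1) ≠ 0 :=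
        mul_ne_zero (hc3 a) (hc4 a (by omega))
      have h2 := (mul_eq_zero.mp h1).resolve_left hne
      rw [show 2 * (k + 1) = 2 * k + 2 by ring]
      exact h2
  have zLow : ∀ a b : ℕ, a + b < n → t a b = 0 := by
    intro a b hab
    rcases Nat.even_or_odd a with ⟨k, hk⟩ | ⟨k, hk⟩
    · rw [show a = 2 * k by omega]
      exact AscL k b (by omega)
    · rcases Nat.even_or_odd b with ⟨l, hl⟩ | ⟨l, hl⟩
      · rw [show b = 2 * l by omega]
        exact DescL l a (by omega)
      · have h1 := hFn (b - 1) a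
        rw [show b - 1 + 1 = b by omega] at h1
        rw [h1, show b - 1 = 2 * l by omega]
        exact AscL l (a + 1) (by omega)
  -- boundary rows/columns for the high region
  have rowN : ∀ b : ℕ, 1 ≤ b → t n b = 0 := by
    intro b hb
    have h1 := hFn n (b - 1)
    rw [show b - 1 + 1 = b by omega] at h1
    rw [← h1]
    exact h0 _ _ (Or.inr (by omega))
  have colN : ∀ a : ℕ, 1 ≤ a → t a n = 0 := by
    intro a ha
    have h1 := hHn a n
    rw [rowN a ha, mul_zero] at h1
    have hne : ((n : ℂ) - 2 * ((n : ℕ) : ℂ)) ≠ 0 := by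
      intro hc; exact hnC (by linear_combination -hc)
    exact (mul_eq_zero.mp h1.symm).resolve_left hne
  have AscH : ∀ k a b : ℕ, b + 2 * k = n → 1 ≤ a → t (a + 2 * k) b = 0 := by
    intro k
    induction k with
    | zero =>
      intro a b hb ha
      rw [show a + 2 * 0 = a by ring, show b = n by omega]
      exact colN a ha
    | succ k ih =>
      intro a b hb ha
      have h1 := R (a + 2 * k) b
      rw [ih a (b + 2) (by omega) ha, mul_zero] at h1
      have hne : ((b : ℂ) + 1) * ((n : ℂ) - (b : ℂ)) ≠ 0 :=
        mul_ne_zero (hc1 b) (hc2 b (by omega))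
      have h2 := (mul_eq_zero.mp h1.symm).resolve_left hne
      rw [show a + 2 * (k + 1) = a + 2 * k + 2 by ring]
      exact h2
  have DescH : ∀ k a b : ℕ, a + 2 * k = n → 1 ≤ b → t a (b + 2 * k) = 0 := by
    intro k
    induction k with
    | zero =>
      intro a b ha hb
      rw [show b + 2 * 0 = b by ring, show a = n by omega]
      exact rowN b hb
    | succ k ih =>
      intro a b ha hb
      have h1 := R a (b + 2 * k)
      rw [ih (a + 2) b (by omega) hb, mul_zero] at h1
      have hne : ((a : ℂ) + 2) * ((n : ℂ) - (a : ℂ) - 1) ≠ 0 :=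
        mul_ne_zero (hc3 a) (hc4 a (by omega))
      have h2 := (mul_eq_zero.mp h1).resolve_left hne
      rw [show b + 2 * (k + 1) = b + 2 * k + 2 by ring]
      exact h2
  have zHigh : ∀ a b : ℕ, n < a + b → t a b = 0 := by
    intro a b hab
    by_cases ha' : n < a
    · exact h0 a b (Or.inl (by omega))
    by_cases hb' : n < b
    · exact h0 a b (Or.inr (by omega))
    rcases Nat.even_or_odd (n - b) with ⟨k, hk⟩ | ⟨k, hk⟩
    · rw [show a = (a + b - n) + 2 * k by omega]
      exact AscH k (a + b - n) b (by omega) (by omega)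
    · rcases Nat.even_or_odd (n - a) with ⟨l, hl⟩ | ⟨l, hl⟩
      · rw [show b = (a + b - n) + 2 * l by omega]
        exact DescH l a (a + b - n) (by omega) (by omega)
      · by_cases han : a = n
        · rw [han]
          exact rowN b (by omega)
        · have h1 := hFn (b - 1) a
          rw [show b - 1 + 1 = b by omega] at h1
          rw [h1, show a + 1 = (a + b - n) + 2 * (k + 1) by omega]
          exact DescH (k + 1) (b - 1) (a + b - n) (by omega) (by omega)
  -- the anti-diagonal
  have P2 : ∀ a b : ℕ, a + b + 2 = n → t (a + 2) b = t a (b + 2) := by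
    intro a b hab
    have h1 := R a b
    have hn' : (a : ℂ) + (b : ℂ) + 2 = (n : ℂ) := by exact_mod_cast congrArg (Nat.cast : ℕ → ℂ) hab
    have hne : ((a : ℂ) + 2) * ((b : ℂ) + 1) ≠ 0 := mul_ne_zero (hc3 a) (hc1 b)
    apply mul_left_cancel₀ hne
    linear_combination -h1 + (((b : ℂ) + 1) * t (a + 2) b - ((a : ℂ) + 2) * t a (b + 2)) * hn'
  have EvenChain : ∀ k b : ℕ, 2 * k + b = n → t (2 * k) b = t 0 n := by
    intro k
    induction k with
    | zero =>
      intro b hb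
      rw [show 2 * 0 = 0 by ring, show b = n by omega]
    | succ k ih =>
      intro b hb
      rw [show 2 * (k + 1) = 2 * k + 2 by ring, P2 (2 * k) b (by omega)]
      exact ih (b + 2) (by omega)
  have OddChain : ∀ k b : ℕ, 2 * k + 1 + b = n → t (2 * k + 1) b = t 1 (b + 2 * k) := by
    intro k
    induction k with
    | zero =>
      intro b hb
      norm_num
    | succ k ih =>
      intro b hb
      rw [show 2 * (k + 1) + 1 = (2 * k + 1) + 2 by ring, P2 (2 * k + 1) b (by omega),
        ih (b + 2) (by omega), show b + 2 + 2 * k = b + 2 * (k + 1) by ring]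
  have hTn0 : t n 0 = -t 0 n := by
    have h1 := hHn n 0
    have h2 : (n : ℂ) * t n 0 = (n : ℂ) * (-t 0 n) := by
      push_cast at h1
      linear_combination -h1
    exact mul_left_cancel₀ hnC h2
  have evenZero : Even n → t 0 n = 0 := by
    rintro ⟨k, hk⟩
    have he := EvenChain k 0 (by omega)
    rw [show 2 * k = n by omega, hTn0] at he
    linear_combination (-(1 : ℂ) / 2) * he
  have oneRel : ∀ b0 : ℕ, b0 + 1 = n → t 1 b0 = -t 0 n := by
    intro b0 hb0
    rcases Nat.even_or_odd n with hev | ⟨k, hk⟩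
    · obtain ⟨k, hk⟩ := hev
      have hz := evenZero ⟨k, hk⟩
      have h1 := hFn (b0 - 1) 1
      rw [show b0 - 1 + 1 = b0 by omega] at h1
      have he2 := EvenChain (k - 1) 2 (by omega)
      rw [h1, show b0 - 1 = 2 * (k - 1) by omega, he2, hz]
      norm_num
    · have ho := OddChain k 0 (by omega)
      rw [show 2 * k + 1 = n by omega, hTn0] at ho
      rw [show b0 = 0 + 2 * k by omega]
      exact ho.symm
  have antidiag : ∀ a b : ℕ, a + b = n → t a b = (-1 : ℂ) ^ a * t 0 n := by
    intro a b hab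
    rcases Nat.even_or_odd a with ⟨k, hk⟩ | ⟨k, hk⟩
    · have h1 : t a b = t 0 n := by
        rw [show a = 2 * k by omega]
        exact EvenChain k b (by omega)
      rw [h1, Even.neg_one_pow ⟨k, by omega⟩, one_mul]
    · have h1 : t a b = t 1 (b + 2 * k) := by
        rw [show a = 2 * k + 1 by omega]
        exact OddChain k b (by omega)
      rw [h1, oneRel (b + 2 * k) (by omega), Odd.neg_one_pow ⟨k, by omega⟩]
      ring
  constructor
  · intro hev
    ext i j
    simp only [Matrix.zero_apply]
    rw [← tEq i j]
    rcases lt_trichotomy ((i : ℕ) + (j : ℕ)) n with h | h | h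
    · exact zLow _ _ h
    · rw [antidiag _ _ h, evenZero hev, mul_zero]
    · exact zHigh _ _ h
  · intro _
    refine ⟨t 0 n, ?_⟩
    ext i j
    simp only [Matrix.smul_apply, sl2Omega, smul_eq_mul]
    rw [← tEq i j]
    by_cases h : (i : ℕ) + (j : ℕ) = n
    · rw [if_pos h, antidiag _ _ h]
      ring
    · rw [if_neg h, mul_zero]
      rcases lt_or_gt_of_ne h with h' | h'
      · exact zLow _ _ h'
      · exact zHigh _ _ h'
end

section
/- Let V = W₂ ⊗ W_n where W₂ is a 2-dimensional space with area form ⟨·,·⟩ and W_n an n-dimensional space with nondegenerate symmetric form (·,·), n ≥ 3, and 𝔤 = 𝔰𝔩(W₂) ⊕ 𝔰𝔬(W_n) acting on V. For A ∈ 𝔰𝔩(W₂) and M ∈ 𝔰𝔬(W_n), the map ρ_{A+M} : Λ²V → 𝔤 defined by ρ_{A+M}(e₁⊗x₁, e₂⊗x₂) = ⟨e₁,e₂⟩((x₁,x₂)(A+M) + (x₁∧Mx₂ + x₂∧Mx₁)) + (x₁,Mx₂)e₁e₂ − ⟨Ae₁,e₂⟩x₁∧x₂ satisfies the first Bianchi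 identity: ρ(u,v)·w + ρ(v,w)·u + ρ(w,u)·v = 0 for all u,v,w ∈ V. -/
open LinearMap TensorProduct

/-- The element `x₁ ∧ x₂ ∈ Λ²W_n ≅ 𝔰𝔬(W_n)` as an endomorphism:
`(x₁ ∧ x₂)·x₃ = (x₁,x₃)x₂ − (x₂,x₃)x₁`. -/
noncomputable def wedgeOp {𝕜 : Type*} [Field 𝕜] {Wn : Type*} [AddCommGroup Wn]
    [Module 𝕜 Wn] (Bn : LinearMap.BilinForm 𝕜 Wn) (x y : Wn) : Module.End 𝕜 Wn :=
  (Bn x).smulRight y - (Bn y).smulRight x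

/-- The element `e₁e₂ ∈ S²W₂ ≅ 𝔰𝔩(W₂)` as an endomorphism:
`(e₁e₂)·e₃ = ⟨e₁,e₃⟩e₂ + ⟨e₂,e₃⟩e₁`. -/
noncomputable def symOp {𝕜 : Type*} [Field 𝕜] {W₂ : Type*} [AddCommGroup W₂]
    [Module 𝕜 W₂] (ω : LinearMap.BilinForm 𝕜 W₂) (e f : W₂) : Module.End 𝕜 W₂ :=
  (ω e).smulRight f + (ω f).smulRight e

/-- The curvature map `ρ_{A+M}` evaluated on the pair of decomposable vectors
`e₁ ⊗ x₁, e₂ ⊗ x₂ ∈ V = W₂ ⊗ W_n`, as an endomorphism of `V`: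
`ρ_{A+M}(e₁⊗x₁, e₂⊗x₂) = ⟨e₁,e₂⟩((x₁,x₂)(A+M) + (x₁∧Mx₂ + x₂∧Mx₁))
  + (x₁,Mx₂)e₁e₂ − ⟨Ae₁,e₂⟩x₁∧x₂`. -/
noncomputable def curvOp {𝕜 : Type*} [Field 𝕜] {W₂ Wn : Type*} [AddCommGroup W₂]
    [Module 𝕜 W₂] [AddCommGroup Wn] [Module 𝕜 Wn]
    (ω : LinearMap.BilinForm 𝕜 W₂) (Bn : LinearMap.BilinForm 𝕜 Wn)
    (A : Module.End 𝕜 W₂) (M : Module.End 𝕜 Wn) (e₁ : W₂) (x₁ : Wn) (e₂ : W₂)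
    (x₂ : Wn) : Module.End 𝕜 (W₂ ⊗[𝕜] Wn) :=
  ω e₁ e₂ • (Bn x₁ x₂ • (LinearMap.rTensor Wn A + LinearMap.lTensor W₂ M) +
      LinearMap.lTensor W₂ (wedgeOp Bn x₁ (M x₂) + wedgeOp Bn x₂ (M x₁))) +
    Bn x₁ (M x₂) • LinearMap.rTensor Wn (symOp ω e₁ e₂) -
    ω (A e₁) e₂ • LinearMap.lTensor W₂ (wedgeOp Bn x₁ x₂)

private lemma cyc_aux' {𝕜 : Type*} [Field 𝕜] {W₂ : Type*} [AddCommGroup W₂] [Module 𝕜 W₂]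
    (ω : LinearMap.BilinForm 𝕜 W₂) (hω : ω.IsAlt)
    (e₁ e₂ e₃ : W₂) (a b : 𝕜) (h : e₃ = a • e₁ + b • e₂) :
    ω e₁ e₂ • e₃ + ω e₂ e₃ • e₁ + ω e₃ e₁ • e₂ = 0 := by
  have hskew : ∀ x y : W₂, ω y x = - ω x y := fun x y => (LinearMap.IsAlt.neg hω x y).symm
  subst h
  simp only [map_add, map_smul, LinearMap.add_apply, LinearMap.smul_apply, smul_eq_mul,
    hω e₁, hω e₂, hskew e₁ e₂]
  module

private lemma cyc' {𝕜 : Type*} [Field 𝕜] {W₂ : Type*} [AddCommGroup W₂] [Module 𝕜 W₂]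
    [FiniteDimensional 𝕜 W₂] (h₂ : Module.finrank 𝕜 W₂ = 2)
    (ω : LinearMap.BilinForm 𝕜 W₂) (hω : ω.IsAlt) (e₁ e₂ e₃ : W₂) :
    ω e₁ e₂ • e₃ + ω e₂ e₃ • e₁ + ω e₃ e₁ • e₂ = 0 := by
  have hskew : ∀ x y : W₂, ω y x = - ω x y := fun x y => (LinearMap.IsAlt.neg hω x y).symm
  by_cases hli : LinearIndependent 𝕜 ![e₁, e₂]
  · have hsp : Submodule.span 𝕜 (Set.range ![e₁, e₂]) = ⊤ :=
      hli.span_eq_top_of_card_eq_finrank (by simp [h₂])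
    have h3 : e₃ ∈ Submodule.span 𝕜 ({e₁, e₂} : Set W₂) := by
      have hr : Set.range ![e₁, e₂] = {e₁, e₂} := by
        ext z; simp [Fin.exists_fin_two, or_comm]
      rw [← hr, hsp]; trivial
    obtain ⟨a, b, hab⟩ := Submodule.mem_span_pair.mp h3
    exact cyc_aux' ω hω e₁ e₂ e₃ a b hab.symm
  · rw [linearIndependent_fin2] at hli
    push_neg at hli
    simp only [Matrix.cons_val_one, Matrix.head_cons, Matrix.cons_val_zero] at hli
    by_cases h2 : e₂ = 0
    · simp [h2, hω.self_eq_zero, map_zero]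
    · obtain ⟨a, ha⟩ := hli h2
      subst ha
      simp only [map_smul, LinearMap.smul_apply, smul_eq_mul, hω e₂, hskew e₂ e₃]
      module

/-- For `V = W₂ ⊗ W_n` (`dim W₂ = 2` with area form `ω`, `dim W_n = n ≥ 3`
with nondegenerate symmetric form `Bn`), `A ∈ 𝔰𝔩(W₂)` and `M ∈ 𝔰𝔬(W_n)`, the
curvature map `ρ_{A+M}` satisfies the first Bianchi identity
`ρ(u,v)·w + ρ(v,w)·u + ρ(w,u)·v = 0`. -/
theorem stmt_13 {𝕜 : Type*} [Field 𝕜] {W₂ Wn : Type*} [AddCommGroup W₂]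
    [Module 𝕜 W₂] [FiniteDimensional 𝕜 W₂] [AddCommGroup Wn] [Module 𝕜 Wn]
    [FiniteDimensional 𝕜 Wn] (n : ℕ) (hn : 3 ≤ n)
    (h₂ : Module.finrank 𝕜 W₂ = 2) (hdim : Module.finrank 𝕜 Wn = n)
    (ω : LinearMap.BilinForm 𝕜 W₂) (hω : ω.IsAlt) (hωnd : ω.Nondegenerate)
    (Bn : LinearMap.BilinForm 𝕜 Wn) (hBn : Bn.IsSymm) (hBnnd : Bn.Nondegenerate)
    (A : Module.End 𝕜 W₂) (hA : ∀ e f : W₂, ω (A e) f + ω e (A f) = 0)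
    (M : Module.End 𝕜 Wn) (hM : ∀ x y : Wn, Bn (M x) y + Bn x (M y) = 0) :
    ∀ (e₁ e₂ e₃ : W₂) (x₁ x₂ x₃ : Wn),
      curvOp ω Bn A M e₁ x₁ e₂ x₂ (e₃ ⊗ₜ[𝕜] x₃) +
        curvOp ω Bn A M e₂ x₂ e₃ x₃ (e₁ ⊗ₜ[𝕜] x₁) +
        curvOp ω Bn A M e₃ x₃ e₁ x₁ (e₂ ⊗ₜ[𝕜] x₂) = 0 := by
  intro e₁ e₂ e₃ x₁ x₂ x₃
  have hskw : ∀ x y : W₂, ω y x = - ω x y := fun x y => (LinearMap.IsAlt.neg hω x y).symm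
  have hbsym : ∀ x y : Wn, Bn y x = Bn x y := fun x y => (hBn.eq x y).symm
  have hm : ∀ x y : Wn, Bn (M x) y = -(Bn x (M y)) := fun x y =>
    eq_neg_of_add_eq_zero_left (hM x y)
  have hmanti : ∀ x y : Wn, Bn y (M x) = -(Bn x (M y)) := fun x y => by
    rw [hbsym (M x) y, hm]
  let bW := Module.finBasis 𝕜 W₂
  let bN := Module.finBasis 𝕜 Wn
  refine Module.Basis.ext_elem (Module.Basis.tensorProduct bW bN) fun p => ?_
  obtain ⟨i, j⟩ := p
  have repr_cyc : ∀ u v w : W₂,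
      ω u v * bW.repr w i + ω v w * bW.repr u i + ω w u * bW.repr v i = 0 := by
    intro u v w
    have := congrArg (fun z => bW.repr z i) (cyc' h₂ ω hω u v w)
    simpa [map_add, Finsupp.add_apply, map_smul, Finsupp.smul_apply, smul_eq_mul] using this
  have C0 := repr_cyc e₁ e₂ e₃
  have C1 : ω e₁ e₂ * bW.repr (A e₃) i - ω (A e₂) e₃ * bW.repr e₁ i +
      ω (A e₃) e₁ * bW.repr e₂ i = 0 := by
    have h := repr_cyc e₁ e₂ (A e₃)
    rw [show ω e₂ (A e₃) = -(ω (A e₂) e₃) from by linear_combination hA e₂ e₃] at h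
    linear_combination h
  have C2 : ω e₂ e₃ * bW.repr (A e₁) i - ω (A e₃) e₁ * bW.repr e₂ i +
      ω (A e₁) e₂ * bW.repr e₃ i = 0 := by
    have h := repr_cyc e₂ e₃ (A e₁)
    rw [show ω e₃ (A e₁) = -(ω (A e₃) e₁) from by linear_combination hA e₃ e₁] at h
    linear_combination h
  have C3 : ω e₃ e₁ * bW.repr (A e₂) i - ω (A e₁) e₂ * bW.repr e₃ i +
      ω (A e₂) e₃ * bW.repr e₁ i = 0 := by
    have h := repr_cyc e₃ e₁ (A e₂)
    rw [show ω e₁ (A e₂) = -(ω (A e₁) e₂) from by linear_combination hA e₁ e₂] at h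
    linear_combination h
  rw [map_zero]
  simp only [curvOp, wedgeOp, symOp, LinearMap.sub_apply, LinearMap.add_apply,
    LinearMap.smul_apply, rTensor_tmul, lTensor_tmul, smulRight_apply, smul_eq_mul,
    map_add, map_sub, map_smul, tmul_add, tmul_sub, tmul_smul, smul_tmul',
    Finsupp.add_apply, Finsupp.sub_apply, Finsupp.smul_apply, Finsupp.coe_zero,
    Pi.zero_apply, Module.Basis.tensorProduct_repr_tmul_apply]
  rw [show ω e₂ e₁ = -(ω e₁ e₂) from hskw e₁ e₂, show ω e₃ e₂ = -(ω e₂ e₃) from hskw e₂ e₃,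
    show ω e₁ e₃ = -(ω e₃ e₁) from hskw e₃ e₁,
    show Bn x₂ x₁ = Bn x₁ x₂ from hbsym x₁ x₂, show Bn x₃ x₂ = Bn x₂ x₃ from hbsym x₂ x₃,
    show Bn x₁ x₃ = Bn x₃ x₁ from hbsym x₃ x₁,
    show Bn (M x₂) x₃ = -(Bn x₂ (M x₃)) from hm x₂ x₃,
    show Bn (M x₁) x₃ = -(Bn x₁ (M x₃)) from hm x₁ x₃,
    show Bn (M x₃) x₁ = -(Bn x₃ (M x₁)) from hm x₃ x₁,
    show Bn (M x₂) x₁ = -(Bn x₂ (M x₁)) from hm x₂ x₁,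
    show Bn (M x₁) x₂ = -(Bn x₁ (M x₂)) from hm x₁ x₂,
    show Bn (M x₃) x₂ = -(Bn x₃ (M x₂)) from hm x₃ x₂,
    show Bn x₂ (M x₁) = -(Bn x₁ (M x₂)) from hmanti x₁ x₂,
    show Bn x₃ (M x₂) = -(Bn x₂ (M x₃)) from hmanti x₂ x₃,
    show Bn x₁ (M x₃) = -(Bn x₃ (M x₁)) from hmanti x₃ x₁]
  linear_combination (Bn x₁ x₂ * bN.repr x₃ j) * C1 + (Bn x₂ x₃ * bN.repr x₁ j) * C2 +
    (Bn x₃ x₁ * bN.repr x₂ j) * C3 +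
    (bN.repr (M x₃) j * Bn x₁ x₂ + bN.repr (M x₁) j * Bn x₂ x₃ +
      bN.repr (M x₂) j * Bn x₃ x₁) * C0
end
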